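/- If a 2-connected graph G has an odd ear-decomposition (one in which every ear has odd length), then G is factor-critical, i.e., G − v has a perfect matching for every vertex v of G. -/

import Mathlib

open SimpleGraph

variable {V : Type*}

/-- A graph is 2-connected: connected, at least 3 vertices, and deleting any
vertex keeps it connected. -/
def TwoConnected (G : SimpleGraph V) : Prop :=
  G.Connected ∧ 3 ≤ Nat.card V ∧
    ∀ v : V, ((⊤ : G.Subgraph).deleteVerts {v}).coe.Connected

/-- A graph is non-bipartite iff it has an odd circuit. -/
def HasOddCircuit (G : SimpleGraph V) : Prop :=
  ∃ (u : V) (c : G.Walk u u), c.IsCycle ∧ Odd c.length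

/-- `G` contains a totally odd subdivision of `C3+` (triangle with a doubled
edge): equivalently, the union of an odd circuit and an odd path having exactly
its two distinct endpoints on the circuit. -/
def ContainsOddC3Plus (G : SimpleGraph V) : Prop :=
  ∃ (x : V) (c : G.Walk x x) (a b : V) (p : G.Walk a b),
    c.IsCycle ∧ Odd c.length ∧ p.IsPath ∧ Odd p.length ∧ a ≠ b ∧
    a ∈ c.support ∧ b ∈ c.support ∧
    ∀ w ∈ p.support, w ∈ c.support → w = a ∨ w = b

section Space
variable [Fintype V] [DecidableEq V]

/-- `C` is the edge set of a circuit of `G`. -/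
def IsCircuitSet (G : SimpleGraph V) (C : Finset (Sym2 V)) : Prop :=
  ∃ (u : V) (c : G.Walk u u), c.IsCycle ∧ C = c.edges.toFinset

/-- incidence vector over `𝔽₂` of a set of edges -/
def edgeInd (C : Finset (Sym2 V)) : Sym2 V → ZMod 2 :=
  fun e => if e ∈ C then 1 else 0

/-- the cycle space of `G`: the `𝔽₂`-span of incidence vectors of circuits -/
def cycleSpace (G : SimpleGraph V) : Submodule (ZMod 2) (Sym2 V → ZMod 2) :=
  Submodule.span (ZMod 2) {x | ∃ C, IsCircuitSet G C ∧ x = edgeInd C}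

/-- `C` is a cycle of `G` (an element of the cycle space). -/
def IsCycleSet (G : SimpleGraph V) (C : Finset (Sym2 V)) : Prop :=
  edgeInd C ∈ cycleSpace G

/-- `B` is a cycle basis of `G`: a family of cycles whose incidence vectors
form a basis of the cycle space. -/
def IsCycleBasis (G : SimpleGraph V) (B : Finset (Finset (Sym2 V))) : Prop :=
  (∀ C ∈ B, IsCycleSet G C) ∧
  LinearIndependent (ZMod 2) (fun C : B => edgeInd C.1) ∧
  Submodule.span (ZMod 2) (edgeInd '' (B : Set (Finset (Sym2 V)))) = cycleSpace G

end Space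

/-- data of a potential ear: two endpoints and a walk between them -/
abbrev EarData (G : SimpleGraph V) := Σ a : V, Σ b : V, G.Walk a b

/-- the union of a base circuit and a list of ears, as a subgraph -/
def earsUnion {G : SimpleGraph V} {x : V} (base : G.Walk x x)
    (ears : List (EarData G)) : G.Subgraph :=
  ears.foldl (fun H e => H ⊔ e.2.2.toSubgraph) base.toSubgraph

/-- `e` is an ear of the subgraph `H`: a path with exactly its two distinct
endpoints in `H`, all edges new. -/
def IsEar {G : SimpleGraph V} (H : G.Subgraph) (e : EarData G) : Prop :=
  e.2.2.IsPath ∧ e.1 ≠ e.2.1 ∧ e.1 ∈ H.verts ∧ e.2.1 ∈ H.verts ∧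
  (∀ v ∈ e.2.2.support, v ≠ e.1 → v ≠ e.2.1 → v ∉ H.verts) ∧
  ∀ ed ∈ e.2.2.edges, ed ∉ H.edgeSet

/-- an (open) ear-decomposition of `G` -/
structure EarDecomposition (G : SimpleGraph V) where
  x : V
  base : G.Walk x x
  base_cycle : base.IsCycle
  ears : List (EarData G)
  ear_cond : ∀ i (h : i < ears.length),
    IsEar (earsUnion base (ears.take i)) (ears.get ⟨i, h⟩)
  union_top : earsUnion base ears = ⊤

/-- an ear-decomposition is odd if the base circuit and all ears are odd -/
def EarDecomposition.IsOdd {G : SimpleGraph V} (ed : EarDecomposition G) : Prop :=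
  Odd ed.base.length ∧ ∀ e ∈ ed.ears, Odd e.2.2.length

/-- `G` is a totally odd subdivision of `K₄`. -/
def IsTotallyOddK4 (G : SimpleGraph V) : Prop :=
  ∃ (b : Fin 4 → V) (p : ∀ i j : Fin 4, i < j → G.Walk (b i) (b j)),
    Function.Injective b ∧
    (∀ i j h, (p i j h).IsPath ∧ Odd (p i j h).length) ∧
    (∀ i j h i' j' h', (i, j) ≠ (i', j') →
      ∀ v ∈ (p i j h).support, v ∈ (p i' j' h').support →
        (v = b i ∨ v = b j) ∧ (v = b i' ∨ v = b j')) ∧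
    (⨆ i, ⨆ j, ⨆ h : i < j, (p i j h).toSubgraph) = ⊤

/-- `G` contains a totally odd subdivision of `K₄` as a subgraph. -/
def ContainsTotallyOddK4 (G : SimpleGraph V) : Prop :=
  ∃ (b : Fin 4 → V) (p : ∀ i j : Fin 4, i < j → G.Walk (b i) (b j)),
    Function.Injective b ∧
    (∀ i j h, (p i j h).IsPath ∧ Odd (p i j h).length) ∧
    (∀ i j h i' j' h', (i, j) ≠ (i', j') →
      ∀ v ∈ (p i j h).support, v ∈ (p i' j' h').support →
        (v = b i ∨ v = b j) ∧ (v = b i' ∨ v = b j'))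

/-- `G` contains an odd theta subgraph through the vertex `w`: three pairwise
internally disjoint and edge-disjoint odd paths with the same distinct ends,
one of them passing through `w`. -/
def ContainsOddThetaThrough (G : SimpleGraph V) (w : V) : Prop :=
  ∃ (x y : V) (p1 p2 p3 : G.Walk x y), x ≠ y ∧
    p1.IsPath ∧ p2.IsPath ∧ p3.IsPath ∧
    Odd p1.length ∧ Odd p2.length ∧ Odd p3.length ∧
    (∀ v ∈ p1.support, v ∈ p2.support → v = x ∨ v = y) ∧
    (∀ v ∈ p1.support, v ∈ p3.support → v = x ∨ v = y) ∧
    (∀ v ∈ p2.support, v ∈ p3.support → v = x ∨ v = y) ∧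
    (∀ e ∈ p1.edges, e ∉ p2.edges) ∧
    (∀ e ∈ p1.edges, e ∉ p3.edges) ∧
    (∀ e ∈ p2.edges, e ∉ p3.edges) ∧
    (w ∈ p1.support ∨ w ∈ p2.support ∨ w ∈ p3.support)

/-- a graph is factor-critical if deleting any vertex leaves a graph with a
perfect matching -/
def FactorCritical {W : Type*} (H : SimpleGraph W) : Prop :=
  ∀ v : W, ∃ M : ((⊤ : H.Subgraph).deleteVerts {v}).coe.Subgraph,
    M.IsPerfectMatching

/-! Call `S` factor-critical in `G` if `S \ {v}` is the vertex set of a matching of `G` for every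
`v ∈ S`. An odd circuit is factor-critical, and adding an odd ear `P` from `a` to `b` keeps this
property: for `v ∈ S`, add the perfect matching of the interior of `P` to a matching of `S \ {v}`;
for an inner vertex `v` of `P`, the two parts of `P` at `v` have lengths of different parity, and if
the even one ends at `x ∈ {a, b}`, a matching of `S \ {x}` together with alternate edges of `P`
covers everything but `v`. Induction along the ears. -/

namespace SimpleGraph

variable {G : SimpleGraph V}

def IsMatchingVerts (G : SimpleGraph V) (A : Set V) : Prop :=
  ∃ M : G.Subgraph, M.IsMatching ∧ M.verts = A

def FactorCriticalOn (G : SimpleGraph V) (S : Set V) : Prop :=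
  ∀ v ∈ S, G.IsMatchingVerts (S \ {v})

lemma isMatchingVerts_empty : G.IsMatchingVerts ∅ :=
  ⟨⊥, fun _ hv => hv.elim, rfl⟩

lemma Adj.isMatchingVerts_pair {u v : V} (h : G.Adj u v) : G.IsMatchingVerts {u, v} :=
  ⟨G.subgraphOfAdj h, Subgraph.IsMatching.subgraphOfAdj h, rfl⟩

lemma IsMatchingVerts.union {A B : Set V} (hA : G.IsMatchingVerts A)
    (hB : G.IsMatchingVerts B) (h : Disjoint A B) : G.IsMatchingVerts (A ∪ B) := by
  obtain ⟨M, hM, rfl⟩ := hA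
  obtain ⟨M', hM', rfl⟩ := hB
  exact ⟨M ⊔ M', hM.sup hM' (by rwa [hM.support_eq_verts, hM'.support_eq_verts]), rfl⟩

namespace Walk

lemma IsPath.ne_of_odd {a b : V} {p : G.Walk a b} (hp : p.IsPath) (ho : Odd p.length) :
    a ≠ b := by
  rintro rfl
  simp [length_eq_zero_iff.2 (hp.nil_iff_eq.2 rfl)] at ho

lemma IsPath.isMatchingVerts_of_parity {a b : V} {p : G.Walk a b} (hp : p.IsPath) :
    (Even p.length → G.IsMatchingVerts ({w | w ∈ p.support} \ {a})) ∧
      (Odd p.length → G.IsMatchingVerts {w | w ∈ p.support}) := by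
  induction p with
  | nil =>
    refine ⟨fun _ => ?_, fun h => absurd h (by simp)⟩
    simpa using isMatchingVerts_empty
  | @cons u v b h q ih =>
    have hu : u ∉ q.support := (cons_isPath_iff h q).1 hp |>.2
    obtain ⟨ihe, iho⟩ := ih ((cons_isPath_iff h q).1 hp).1
    refine ⟨fun he => ?_, fun ho => ?_⟩
    · convert iho (by simpa [parity_simps] using he) using 1
      ext w
      simp only [support_cons, List.mem_cons, Set.mem_sdiff, Set.mem_ofPred_eq,
        Set.mem_singleton_iff]
      grind
    · convert (h.isMatchingVerts_pair).union (ihe (by simpa [parity_simps] using ho)) ?_ using 1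
      · ext w
        simp only [support_cons, List.mem_cons, Set.mem_union, Set.mem_sdiff, Set.mem_ofPred_eq,
          Set.mem_singleton_iff, Set.mem_insert_iff]
        grind [start_mem_support]
      · rw [Set.disjoint_left]
        rintro w hw ⟨hwq, hwv⟩
        rcases hw with rfl | rfl
        exacts [hu hwq, hwv rfl]

lemma IsPath.isMatchingVerts_support_diff_start {a b : V} {p : G.Walk a b} (hp : p.IsPath)
    (he : Even p.length) : G.IsMatchingVerts ({w | w ∈ p.support} \ {a}) :=
  hp.isMatchingVerts_of_parity.1 he

lemma IsPath.isMatchingVerts_support_diff_ends {a b : V} {p : G.Walk a b} (hp : p.IsPath)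
    (ho : Odd p.length) : G.IsMatchingVerts ({w | w ∈ p.support} \ {a, b}) := by
  cases p with
  | nil => simp at ho
  | @cons _ c _ h q =>
    have hq := (cons_isPath_iff h q).1 hp
    convert hq.1.reverse.isMatchingVerts_support_diff_start
      (by simpa [parity_simps] using ho) using 1
    ext w
    simp only [support_cons, support_reverse, List.mem_cons, List.mem_reverse, Set.mem_sdiff,
      Set.mem_ofPred_eq, Set.mem_singleton_iff, Set.mem_insert_iff]
    grind

lemma IsCycle.isMatchingVerts_support_diff_start {v : V} {c : G.Walk v v} (hc : c.IsCycle)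
    (ho : Odd c.length) : G.IsMatchingVerts ({w | w ∈ c.support} \ {v}) := by
  cases c with
  | nil => exact absurd rfl hc.ne_nil
  | @cons _ c _ h q =>
    convert ((cons_isCycle_iff q h).1 hc).1.reverse.isMatchingVerts_support_diff_start
      (by simpa [parity_simps] using ho) using 1
    ext w
    simp only [support_cons, support_reverse, List.mem_cons, List.mem_reverse, Set.mem_sdiff,
      Set.mem_ofPred_eq, Set.mem_singleton_iff]
    grind [end_mem_support]

lemma IsCycle.isMatchingVerts_support_diff {u v : V} {c : G.Walk u u}
    (hc : c.IsCycle) (ho : Odd c.length) (hv : v ∈ c.support) :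
    G.IsMatchingVerts ({w | w ∈ c.support} \ {v}) := by
  classical
  convert (hc.rotate hv).isMatchingVerts_support_diff_start (by rwa [length_rotate]) using 3
  ext w
  exact (mem_support_rotate_iff c v hv).symm

lemma IsPath.isMatchingVerts_append {a v b : V} {p : G.Walk a v} {q : G.Walk v b}
    (hpq : (p.append q).IsPath) (hp : Even p.length) (hq : Odd q.length) :
    G.IsMatchingVerts ({w | w ∈ (p.append q).support} \ {v, b}) := by
  have hbp : b ∉ p.support := fun hb => hpq.ne_of_mem_support_of_append
    (hpq.of_append_right.ne_of_odd hq).symm hb q.end_mem_support rfl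
  convert (hpq.of_append_left.reverse.isMatchingVerts_support_diff_start
    (by rwa [length_reverse])).union
    (hpq.of_append_right.isMatchingVerts_support_diff_ends hq) ?_ using 1
  · ext w
    simp only [mem_support_append_iff, support_reverse, List.mem_reverse, Set.mem_union,
      Set.mem_sdiff, Set.mem_ofPred_eq, Set.mem_singleton_iff, Set.mem_insert_iff]
    grind [end_mem_support]
  · rw [Set.disjoint_left]
    rintro w ⟨hwp, -⟩ ⟨hwq, hwv⟩
    exact hpq.ne_of_mem_support_of_append (fun h => hwv (.inl h)) (by simpa using hwp) hwq rfl

end Walk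

open Walk in
lemma FactorCriticalOn.union_support_of_isPath {S : Set V} (hS : G.FactorCriticalOn S)
    {a b : V} {p : G.Walk a b} (hp : p.IsPath) (ho : Odd p.length) (ha : a ∈ S) (hb : b ∈ S)
    (hint : ∀ w ∈ p.support, w ≠ a → w ≠ b → w ∉ S) :
    G.FactorCriticalOn (S ∪ {w | w ∈ p.support}) := by
  intro v hv
  by_cases hvS : v ∈ S
  · convert (hS v hvS).union (hp.isMatchingVerts_support_diff_ends ho) ?_ using 1
    · ext w
      simp only [Set.mem_union, Set.mem_sdiff, Set.mem_ofPred_eq, Set.mem_singleton_iff,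
        Set.mem_insert_iff]
      grind
    · rw [Set.disjoint_left]
      rintro w ⟨hwS, -⟩ ⟨hwp, hwab⟩
      exact hint w hwp (fun h => hwab (.inl h)) (fun h => hwab (.inr h)) hwS
  have hvp : v ∈ p.support := hv.resolve_left hvS
  have hab : a ≠ b := hp.ne_of_odd ho
  obtain ⟨x, y, hx, hy, hxy, hxp, hSp, hP⟩ : ∃ x y, x ∈ S ∧ y ∈ S ∧ x ≠ y ∧ x ∈ p.support ∧
      (∀ w ∈ p.support, w ∈ S → w = x ∨ w = y) ∧
      G.IsMatchingVerts ({w | w ∈ p.support} \ {v, y}) := by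
    obtain ⟨q, r, -, -, rfl⟩ := hp.mem_support_iff_exists_append.1 hvp
    rw [length_append] at ho
    rcases Nat.even_or_odd q.length with hq | hq
    · exact ⟨a, b, ha, hb, hab, start_mem_support _, fun w hwp hwS => by grind,
        hp.isMatchingVerts_append hq ((Nat.odd_add'.1 ho).2 hq)⟩
    · refine ⟨b, a, hb, ha, hab.symm, end_mem_support _, fun w hwp hwS => by grind, ?_⟩
      have hrq : (r.reverse.append q.reverse).IsPath := by rw [← reverse_append]; exact hp.reverse
      convert hrq.isMatchingVerts_append (by rw [length_reverse]; exact (Nat.odd_add.1 ho).1 hq)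
        (by rwa [length_reverse]) using 3
      simp [← reverse_append]
  convert (hS x hx).union hP ?_ using 1
  · ext w
    simp only [Set.mem_union, Set.mem_sdiff, Set.mem_ofPred_eq, Set.mem_singleton_iff,
      Set.mem_insert_iff]
    grind
  · rw [Set.disjoint_left]
    rintro w ⟨hwS, hwx⟩ ⟨hwp, hwvy⟩
    exact (hSp w hwp hwS).elim hwx (fun h => hwvy (.inr h))

lemma Subgraph.IsMatching.isPerfectMatching_restrict {H M : G.Subgraph} (hM : M.IsMatching)
    (hle : M ≤ H) (hverts : M.verts = H.verts) : (H.restrict M).IsPerfectMatching := by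
  rw [Subgraph.isPerfectMatching_iff]
  rintro ⟨u, hu⟩
  obtain ⟨w, hw, huniq⟩ := hM (hverts ▸ hu)
  exact ⟨⟨w, hle.1 (M.edge_vert hw.symm)⟩, ⟨hle.2 hw, hw⟩,
    fun y hy => Subtype.ext (huniq y hy.2)⟩

lemma FactorCriticalOn.factorCritical (h : G.FactorCriticalOn Set.univ) : FactorCritical G := by
  intro v
  obtain ⟨M, hM, hMv⟩ := h v trivial
  refine ⟨_, hM.isPerfectMatching_restrict ⟨hMv.le, fun u w huw => ?_⟩ hMv⟩
  have hu : u ∈ M.verts := M.edge_vert huw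
  have hw : w ∈ M.verts := M.edge_vert huw.symm
  rw [hMv] at hu hw
  exact ⟨hu, hw, M.adj_sub huw⟩

end SimpleGraph

lemma earsUnion_take_succ {G : SimpleGraph V} {x : V} (base : G.Walk x x)
    (l : List (EarData G)) {k : ℕ} (hk : k < l.length) :
    earsUnion base (l.take (k + 1)) = earsUnion base (l.take k) ⊔ l[k].2.2.toSubgraph := by
  rw [List.take_add_one, List.getElem?_eq_getElem hk]
  simp only [earsUnion, Option.toList_some, List.foldl_append, List.foldl_cons, List.foldl_nil]

namespace EarDecomposition

variable {G : SimpleGraph V}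

lemma factorCriticalOn_earsUnion_take (ed : EarDecomposition G) (hodd : ed.IsOdd) :
    ∀ k ≤ ed.ears.length, G.FactorCriticalOn (earsUnion ed.base (ed.ears.take k)).verts
  | 0, _ => by
    intro v hv
    simp only [List.take_zero, earsUnion, List.foldl_nil, Walk.verts_toSubgraph] at hv ⊢
    exact ed.base_cycle.isMatchingVerts_support_diff hodd.1 hv
  | k + 1, hk => by
    obtain ⟨hp, -, ha, hb, hint, -⟩ := ed.ear_cond k hk
    rw [earsUnion_take_succ _ _ hk, Subgraph.verts_sup, Walk.verts_toSubgraph]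
    exact (ed.factorCriticalOn_earsUnion_take hodd k (Nat.le_of_succ_le hk)).union_support_of_isPath
      hp (hodd.2 _ (List.getElem_mem hk)) ha hb hint

lemma factorCriticalOn_univ (ed : EarDecomposition G) (hodd : ed.IsOdd) :
    G.FactorCriticalOn Set.univ := by
  simpa [ed.union_top] using ed.factorCriticalOn_earsUnion_take hodd _ le_rfl

end EarDecomposition

theorem stmt19_general {V : Type*} (G : SimpleGraph V)
    (ed : EarDecomposition G) (hodd : ed.IsOdd) :
    FactorCritical G :=
  (ed.factorCriticalOn_univ hodd).factorCritical

/-- a 2-connected graph with an odd ear-decomposition is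
factor-critical. -/
theorem stmt19 {V : Type*} [Fintype V] (G : SimpleGraph V)
    (hG : TwoConnected G) (ed : EarDecomposition G) (hodd : ed.IsOdd) :
    FactorCritical G :=
  stmt19_general G ed hodd
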